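/- Fix 0 < q < 1 and let C_1 = C_1(q) be a positive integer large enough that q^{C_1}/(1-q) < 1/10. There exist constants A = A(q) > 1 and c = c(q) > 0 such that for every integer t ≥ C_1 and every real s ≥ 0, P_t(R_{C_1}^+ > 10t + s/2) ≤ A e^{-cs}, where R_{C_1}^+ = min{k > 0 : M_k ≤ C_1} is the first time the chain reaches level C_1 or below. -/

import Mathlib

/-!
With `a = (3 - q)/2`, the function `V m = a ^ m` contracts by the factor
`ρ = a⁻¹ + (1 - q) q^{C₁} / (1 - a q) < 1` in one step of the chain from any state `m ≥ C₁`: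
the steps with `Z ≤ m` lower `V` by `a⁻¹`, and the geometric tail `Z > m` costs at most the second
term. Independence of `Z_{n+1}` from the past makes `1{R > n} a^{M_n}` a supermartingale up to
the factor `ρ`, so `P_t(R_{C₁}^+ > n) ≤ a^t ρ^n`. The choice of `C₁` gives `a ρ^10 ≤ 1`, hence
with `n = 10 t + ⌊s/2⌋` the bound is at most `ρ^⌊s/2⌋ ≤ ρ⁻¹ e^{(log ρ) s/2}`.
-/

open MeasureTheory
open scoped ENNReal

noncomputable section

/-- The chain `M_0 = m0`, `M_n = max (M_{n-1}, Z_n) - 1`. -/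
def chainM (m0 : ℕ) (z : ℕ → ℕ) : ℕ → ℕ
  | 0 => m0
  | n + 1 => max (chainM m0 z n) (z (n + 1)) - 1

/-- The first time `R_v^+ = min {k > 0 : M_k ≤ v}` the trajectory `M` reaches level `v`
or below, as an element of `ℝ≥0∞` (equal to `∞` if this never happens). -/
noncomputable def retTimeLe (M : ℕ → ℕ) (v : ℕ) : ℝ≥0∞ :=
  ⨅ (k : ℕ) (_ : 0 < k ∧ M k ≤ v), (k : ℝ≥0∞)

/-- `StaysAbove M v n` is the event `R_v^+ > n`. -/
def StaysAbove (M : ℕ → ℕ) (v n : ℕ) : Prop :=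
  ∀ k, 0 < k → k ≤ n → v < M k

namespace StaysAbove

variable {M : ℕ → ℕ} {v n : ℕ}

lemma zero : StaysAbove M v 0 := fun _ hk hkn => absurd hkn (by omega)

lemma mono {n' : ℕ} (h : StaysAbove M v n') (hn : n ≤ n') : StaysAbove M v n :=
  fun k hk hkn => h k hk (hkn.trans hn)

lemma le_apply (h : StaysAbove M v n) (h0 : v ≤ M 0) : v ≤ M n := by
  rcases n.eq_zero_or_pos with rfl | hn
  · exact h0
  · exact (h n hn le_rfl).le

lemma of_lt_retTimeLe {x : ℝ≥0∞} (hx : x < retTimeLe M v) (hn : (n : ℝ≥0∞) ≤ x) :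
    StaysAbove M v n := by
  intro k hk hkn
  by_contra hle
  have hR : retTimeLe M v ≤ k := iInf₂_le k ⟨hk, not_lt.mp hle⟩
  exact absurd (hx.trans_le (hR.trans ((Nat.cast_le.mpr hkn).trans hn))) (lt_irrefl x)

end StaysAbove

open ProbabilityTheory

theorem lintegral_apply_indep_nat {Ω : Type*} {F mΩ : MeasurableSpace Ω} {P : Measure Ω}
    (hF : F ≤ mΩ) {Y : Ω → ℕ} (hY : Measurable Y)
    (hind : Indep F (MeasurableSpace.comap Y inferInstance) P)
    {g : ℕ → Ω → ℝ≥0∞} (hg : ∀ k, Measurable[F] (g k)) :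
    ∫⁻ ω, g (Y ω) ω ∂P = ∫⁻ ω, ∑' k, g k ω * P (Y ⁻¹' {k}) ∂P := by
  have hYk : ∀ k, Measurable[MeasurableSpace.comap Y inferInstance]
      ((Y ⁻¹' {k}).indicator fun _ => (1 : ℝ≥0∞)) := fun k =>
    measurable_const.indicator
      (MeasurableSpace.measurableSet_comap.mpr ⟨{k}, measurableSet_singleton k, rfl⟩)
  have hsplit : ∀ ω, g (Y ω) ω = ∑' k, g k ω * (Y ⁻¹' {k}).indicator (fun _ => 1) ω := fun ω => by
    rw [tsum_eq_single (Y ω) fun k hk => by simp [Ne.symm hk]]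
    simp
  simp_rw [hsplit]
  rw [lintegral_tsum fun k => ((hg k).mono hF le_rfl).fun_mul ((hYk k).mono hY.comap_le le_rfl)
    |>.aemeasurable, lintegral_tsum fun k => ((hg k).mono hF le_rfl).mul_const _ |>.aemeasurable]
  refine tsum_congr fun k => ?_
  rw [lintegral_mul_eq_lintegral_mul_lintegral_of_independent_measurableSpace
    hF hY.comap_le hind (hg k) (hYk k), lintegral_indicator_const (hY (measurableSet_singleton k)),
    one_mul, lintegral_mul_const _ ((hg k).mono hF le_rfl)]

section History

variable {Ω : Type*} {Z : ℕ → Ω → ℕ}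

abbrev history (Z : ℕ → Ω → ℕ) (n : ℕ) : MeasurableSpace Ω :=
  ⨆ i ∈ Set.Iic n, MeasurableSpace.comap (Z i) inferInstance

lemma history_le [mΩ : MeasurableSpace Ω] (hZ : ∀ i, Measurable (Z i)) (n : ℕ) : history Z n ≤ mΩ :=
  iSup₂_le fun i _ => (hZ i).comap_le

lemma history_mono : Monotone (history Z) :=
  fun _ _ hmn => biSup_mono fun _ hi => Set.mem_Iic.mpr (le_trans hi hmn)

lemma comap_le_history {i n : ℕ} (hi : i ≤ n) :
    MeasurableSpace.comap (Z i) inferInstance ≤ history Z n :=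
  le_iSup₂ (f := fun i (_ : i ∈ Set.Iic n) => MeasurableSpace.comap (Z i) inferInstance) i hi

lemma measurable_chainM_history (t n : ℕ) :
    Measurable[history Z n] fun ω => chainM t (Z · ω) n := by
  induction n with
  | zero => exact measurable_const
  | succ n ih =>
    have hM : Measurable[history Z (n + 1)] fun ω => chainM t (Z · ω) n :=
      ih.mono (history_mono n.le_succ) le_rfl
    have hZ : Measurable[history Z (n + 1)] (Z (n + 1)) :=
      Measurable.of_comap_le (comap_le_history le_rfl)
    exact (measurable_of_countable fun p : ℕ × ℕ => max p.1 p.2 - 1).comp (hM.prodMk hZ)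

lemma measurableSet_staysAbove_history (t v n : ℕ) :
    MeasurableSet[history Z n] {ω | StaysAbove (chainM t (Z · ω)) v n} := by
  have : {ω | StaysAbove (chainM t (Z · ω)) v n} =
      ⋂ k ∈ Finset.Icc 1 n, (fun ω => chainM t (Z · ω) k) ⁻¹' Set.Ioi v := by
    ext ω
    simp [StaysAbove, Nat.pos_iff_ne_zero, Nat.one_le_iff_ne_zero]
  rw [this]
  refine Finset.measurableSet_biInter _ fun k hk => ?_
  exact (measurable_chainM_history t k).mono (history_mono (Finset.mem_Icc.mp hk).2) le_rfl
    measurableSet_Ioi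

lemma indep_history_comap_succ [MeasurableSpace Ω] {P : Measure Ω} (hZ : ∀ i, Measurable (Z i))
    (hindep : iIndepFun Z P) (n : ℕ) :
    Indep (history Z n) (MeasurableSpace.comap (Z (n + 1)) inferInstance) P := by
  have := indep_iSup_of_disjoint (fun i => (hZ i).comap_le)
    ((iIndepFun_iff_iIndep _ _ _).mp hindep)
    (S := Set.Iic n) (T := {n + 1}) (Set.disjoint_singleton_right.mpr (by simp))
  simpa only [iSup_singleton] using this

end History

section Lyapunov

variable {Ω : Type*} [MeasurableSpace Ω] {P : Measure Ω} [IsProbabilityMeasure P]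
  {Z : ℕ → Ω → ℕ} {V : ℕ → ℝ≥0∞} {r : ℝ≥0∞} {C t : ℕ}

theorem lintegral_indicator_staysAbove_le (hZ : ∀ i, Measurable (Z i))
    (hindep : iIndepFun Z P)
    (hdrift : ∀ i m, C ≤ m → ∑' k, V (max m k - 1) * P {ω | Z i ω = k} ≤ r * V m)
    (ht : C ≤ t) (n : ℕ) :
    ∫⁻ ω, {ω | StaysAbove (chainM t (Z · ω)) C n}.indicator
      (fun ω => V (chainM t (Z · ω) n)) ω ∂P ≤ r ^ n * V t := by
  induction n with
  | zero => simp [StaysAbove.zero, chainM]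
  | succ n ih =>
    set E := {ω | StaysAbove (chainM t (Z · ω)) C n}
    have hE := measurableSet_staysAbove_history (Z := Z) t C n
    have hM := measurable_chainM_history (Z := Z) t n
    have hV : Measurable[history Z n] fun ω => E.indicator (fun ω => V (chainM t (Z · ω) n)) ω :=
      ((measurable_of_countable V).comp hM).indicator hE
    calc ∫⁻ ω, {ω | StaysAbove (chainM t (Z · ω)) C (n + 1)}.indicator
          (fun ω => V (chainM t (Z · ω) (n + 1))) ω ∂P
        ≤ ∫⁻ ω, E.indicator (fun ω => V (max (chainM t (Z · ω) n) (Z (n + 1) ω) - 1)) ω ∂P :=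
          lintegral_mono fun ω => Set.indicator_le_indicator_of_subset
            (fun _ h => h.mono n.le_succ) (fun _ => zero_le) ω
      _ = ∫⁻ ω, ∑' k, E.indicator (fun ω => V (max (chainM t (Z · ω) n) k - 1)) ω
            * P {ω | Z (n + 1) ω = k} ∂P :=
          lintegral_apply_indep_nat (history_le hZ n) (hZ (n + 1))
            (indep_history_comap_succ hZ hindep n)
            fun k => ((measurable_of_countable fun m => V (max m k - 1)).comp hM).indicator hE
      _ ≤ ∫⁻ ω, r * E.indicator (fun ω => V (chainM t (Z · ω) n)) ω ∂P := by
          refine lintegral_mono fun ω => ?_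
          by_cases hω : ω ∈ E
          · simp only [Set.indicator_of_mem hω]
            exact hdrift (n + 1) _ (StaysAbove.le_apply hω ht)
          · simp [Set.indicator_of_notMem hω]
      _ = r * ∫⁻ ω, E.indicator (fun ω => V (chainM t (Z · ω) n)) ω ∂P :=
          lintegral_const_mul r (hV.mono (history_le hZ n) le_rfl)
      _ ≤ r ^ (n + 1) * V t := by
          rw [pow_succ', mul_assoc]
          exact mul_le_mul_right ih r

theorem measure_staysAbove_le (hZ : ∀ i, Measurable (Z i))
    (hindep : iIndepFun Z P)
    (hdrift : ∀ i m, C ≤ m → ∑' k, V (max m k - 1) * P {ω | Z i ω = k} ≤ r * V m)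
    (hV : ∀ m, 1 ≤ V m) (ht : C ≤ t) (n : ℕ) :
    P {ω | StaysAbove (chainM t (Z · ω)) C n} ≤ r ^ n * V t := by
  calc P {ω | StaysAbove (chainM t (Z · ω)) C n}
      = ∫⁻ ω, {ω | StaysAbove (chainM t (Z · ω)) C n}.indicator 1 ω ∂P :=
        (lintegral_indicator_one
          (history_le hZ n _ (measurableSet_staysAbove_history t C n))).symm
    _ ≤ ∫⁻ ω, {ω | StaysAbove (chainM t (Z · ω)) C n}.indicator
          (fun ω => V (chainM t (Z · ω) n)) ω ∂P :=
        lintegral_mono fun ω => Set.indicator_le_indicator (hV _)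
    _ ≤ r ^ n * V t := lintegral_indicator_staysAbove_le hZ hindep hdrift ht n

end Lyapunov

def geomDrift (q a : ℝ) (m : ℕ) : ℝ := a⁻¹ + (1 - q) * q ^ m / (1 - a * q)

section GeometricStep

variable {q a : ℝ}

lemma geomDrift_antitone (hq0 : 0 ≤ q) (hq1 : q ≤ 1) (haq : a * q < 1) :
    Antitone (geomDrift q a) := fun m m' hmm' => by
  have : 0 < 1 - a * q := by linarith
  have := sub_nonneg.mpr hq1
  unfold geomDrift
  gcongr a⁻¹ + (1 - q) * ?_ / (1 - a * q)
  exact pow_le_pow_of_le_one hq0 hq1 hmm'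

lemma tsum_ite_lt_ofReal_geometric {c r : ℝ} (hc : 0 ≤ c) (hr0 : 0 ≤ r) (hr1 : r < 1) (m : ℕ) :
    ∑' k, (if m < k then ENNReal.ofReal (c * r ^ (k - 1)) else 0)
      = ENNReal.ofReal (c * r ^ m / (1 - r)) := by
  rw [← ENNReal.summable.sum_add_tsum_nat_add' (k := m + 1),
    Finset.sum_eq_zero fun k hk => if_neg (by simp at hk; omega), zero_add]
  have hterm : ∀ j, (if m < j + (m + 1) then ENNReal.ofReal (c * r ^ (j + (m + 1) - 1)) else 0)
      = ENNReal.ofReal (c * r ^ m * r ^ j) := fun j => by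
    rw [if_pos (by omega), mul_assoc, ← pow_add, Nat.add_comm m j]; rfl
  rw [tsum_congr hterm, ← ENNReal.ofReal_tsum_of_nonneg (fun j => by positivity)
    ((summable_geometric_of_lt_one hr0 hr1).mul_left _), tsum_mul_left,
    tsum_geometric_of_lt_one hr0 hr1, div_eq_mul_inv]

theorem tsum_pow_max_sub_one_le_geomDrift {Ω : Type*} [MeasurableSpace Ω] {P : Measure Ω}
    [IsProbabilityMeasure P] (hq0 : 0 ≤ q) (hq1 : q ≤ 1) (ha : 0 < a) (haq : a * q < 1)
    {Y : Ω → ℕ} (hY : Measurable Y) (hpos : ∀ ω, 1 ≤ Y ω)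
    (hgeom : ∀ k, 1 ≤ k → P {ω | Y ω = k} = ENNReal.ofReal ((1 - q) * q ^ (k - 1)))
    {C m : ℕ} (hm : C ≤ m) :
    ∑' k, ENNReal.ofReal a ^ (max m k - 1) * P {ω | Y ω = k}
      ≤ ENNReal.ofReal (geomDrift q a C) * ENNReal.ofReal a ^ m := by
  have h1q : 0 ≤ 1 - q := sub_nonneg.mpr hq1
  have h1aq : 0 < 1 - a * q := sub_pos.mpr haq
  have haq0 : 0 ≤ a * q := mul_nonneg ha.le hq0
  have hpoint : ∀ k, ENNReal.ofReal a ^ (max m k - 1) * P {ω | Y ω = k}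
      ≤ ENNReal.ofReal (a ^ m * a⁻¹) * P {ω | Y ω = k}
        + if m < k then ENNReal.ofReal ((1 - q) * (a * q) ^ (k - 1)) else 0 := by
    rintro (_ | k)
    · have : {ω | Y ω = 0} = ∅ := Set.eq_empty_of_forall_notMem fun ω h => by
        have := hpos ω; simp_all
      simp [this]
    by_cases hkm : k + 1 ≤ m
    · have hpow : a ^ (max m (k + 1) - 1) = a ^ m * a⁻¹ := by
        rw [max_eq_left hkm, pow_sub₀ a ha.ne' (by omega), pow_one]
      rw [← ENNReal.ofReal_pow ha.le, hpow]
      exact le_self_add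
    · rw [if_pos (by omega), max_eq_right (by omega), hgeom _ (by omega), Nat.add_sub_cancel,
        ← ENNReal.ofReal_pow ha.le, ← ENNReal.ofReal_mul (by positivity), mul_pow]
      exact le_add_left (le_of_eq (by ring_nf))
  have hmass : ∑' k, P {ω | Y ω = k} = 1 := by
    rw [← tsum_univ, ← measure_univ (μ := P)]
    exact tsum_measure_preimage_singleton Set.countable_univ fun k _ =>
      hY (measurableSet_singleton k)
  calc ∑' k, ENNReal.ofReal a ^ (max m k - 1) * P {ω | Y ω = k}
      ≤ ∑' k, (ENNReal.ofReal (a ^ m * a⁻¹) * P {ω | Y ω = k}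
          + if m < k then ENNReal.ofReal ((1 - q) * (a * q) ^ (k - 1)) else 0) :=
        ENNReal.tsum_le_tsum hpoint
    _ = ENNReal.ofReal (a ^ m * a⁻¹) + ENNReal.ofReal ((1 - q) * (a * q) ^ m / (1 - a * q)) := by
      rw [ENNReal.tsum_add, ENNReal.tsum_mul_left, hmass, mul_one,
        tsum_ite_lt_ofReal_geometric h1q haq0 haq]
    _ = ENNReal.ofReal (geomDrift q a m) * ENNReal.ofReal a ^ m := by
      rw [← ENNReal.ofReal_add (by positivity) (by positivity), ← ENNReal.ofReal_pow ha.le,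
        ← ENNReal.ofReal_mul (by unfold geomDrift; positivity)]
      congr 1
      unfold geomDrift
      rw [mul_pow]
      ring
    _ ≤ ENNReal.ofReal (geomDrift q a C) * ENNReal.ofReal a ^ m := by
      gcongr
      exact geomDrift_antitone hq0 hq1 haq hm

end GeometricStep

lemma geomDrift_bounds {q : ℝ} {C : ℕ} (hq0 : 0 < q) (hq1 : q < 1)
    (hC : q ^ C / (1 - q) < 1 / 10) :
    0 < geomDrift q ((3 - q) / 2) C ∧ geomDrift q ((3 - q) / 2) C < 1 ∧
      (3 - q) / 2 * geomDrift q ((3 - q) / 2) C ^ 10 ≤ 1 := by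
  set a := (3 - q) / 2 with ha_def
  set ρ := geomDrift q a C
  have ha : 1 < a := by linarith
  have hqC : q ^ C < (1 - q) / 10 := by
    rwa [div_lt_iff₀ (by linarith), div_mul_eq_mul_div, one_mul] at hC
  -- `1 - a q = (1 - q)(2 - q)/2`, so the tail term of `ρ a` is `q^C (3-q)/(2-q) ≤ 2 q^C`,
  -- which the choice of `C` makes `< (1 - q)/5`
  have hρa : ρ * a = 1 + q ^ C * (3 - q) / (2 - q) := by
    have h1aq : 1 - a * q = (1 - q) * (2 - q) / 2 := by rw [ha_def]; ring
    have h2q : 2 - q ≠ 0 := by linarith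
    have h1q : 1 - q ≠ 0 := by linarith
    simp only [ρ, geomDrift]
    rw [h1aq]
    field_simp
    ring
  have hρa_lt : ρ * a < 1 + (1 - q) / 5 := by
    rw [hρa, add_lt_add_iff_left, div_lt_iff₀ (by linarith)]
    nlinarith [pow_pos hq0 C]
  have hρ0 : 0 < ρ := by
    have : 0 < ρ * a := by
      rw [hρa]; exact add_pos_of_pos_of_nonneg one_pos
        (div_nonneg (mul_nonneg (pow_nonneg hq0.le C) (by linarith)) (by linarith))
    exact pos_of_mul_pos_left this (by positivity)
  refine ⟨hρ0, lt_of_mul_lt_mul_right (a := a) (by linarith) (by positivity), ?_⟩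
  have hsq : (1 + (1 - q) / 5) ^ 2 ≤ a := by rw [ha_def]; nlinarith
  have hpow : (ρ * a) ^ 10 ≤ a ^ 9 :=
    calc (ρ * a) ^ 10 ≤ ((1 + (1 - q) / 5) ^ 2) ^ 5 := by
          rw [← pow_mul]; exact pow_le_pow_left₀ (by positivity) hρa_lt.le 10
      _ ≤ a ^ 5 := pow_le_pow_left₀ (by positivity) hsq 5
      _ ≤ a ^ 9 := pow_le_pow_right₀ ha.le (by norm_num)
  refine le_of_mul_le_mul_right (a := a ^ 9) ?_ (by positivity)
  linarith [mul_pow ρ a 10, show a * ρ ^ 10 * a ^ 9 = ρ ^ 10 * a ^ 10 by ring]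

lemma pow_mul_pow_add_floor_le {a ρ : ℝ} (ha : 0 ≤ a) (hρ0 : 0 < ρ) (hρ1 : ρ < 1)
    (haρ : a * ρ ^ 10 ≤ 1) (t : ℕ) (y : ℝ) :
    a ^ t * ρ ^ (10 * t + ⌊y⌋₊) ≤ ρ⁻¹ * Real.exp (Real.log ρ * y) := by
  have hlog : Real.log ρ < 0 := Real.log_neg hρ0 hρ1
  calc a ^ t * ρ ^ (10 * t + ⌊y⌋₊) = (a * ρ ^ 10) ^ t * ρ ^ ⌊y⌋₊ := by
        rw [pow_add, pow_mul, mul_pow]; ring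
    _ ≤ ρ ^ ⌊y⌋₊ := mul_le_of_le_one_left (by positivity) (pow_le_one₀ (by positivity) haρ)
    _ = Real.exp (⌊y⌋₊ * Real.log ρ) := by rw [Real.exp_nat_mul, Real.exp_log hρ0]
    _ ≤ Real.exp (-Real.log ρ + Real.log ρ * y) := by
        gcongr
        nlinarith [Nat.lt_floor_add_one y]
    _ = ρ⁻¹ * Real.exp (Real.log ρ * y) := by rw [Real.exp_add, Real.exp_neg, Real.exp_log hρ0]

theorem passage_time_exponential_tail_general
    {Ω : Type*} [MeasurableSpace Ω] (P : Measure Ω) [IsProbabilityMeasure P]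
    (q : ℝ) (hq0 : 0 < q) (hq1 : q < 1)
    (Z : ℕ → Ω → ℕ)
    (hmeas : ∀ i, Measurable (Z i))
    (hindep : ProbabilityTheory.iIndepFun Z P)
    (hpos : ∀ i ω, 1 ≤ Z i ω)
    (hgeom : ∀ i k, 1 ≤ k →
      P {ω | Z i ω = k} = ENNReal.ofReal ((1 - q) * q ^ (k - 1)))
    (C₁ : ℕ) (hC₁ : q ^ C₁ / (1 - q) < 1 / 10) :
    ∃ A > (1 : ℝ), ∃ c > (0 : ℝ), ∀ t : ℕ, C₁ ≤ t → ∀ s : ℝ, 0 ≤ s →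
      P {ω | ENNReal.ofReal (10 * t + s / 2)
          < retTimeLe (chainM t (fun n => Z n ω)) C₁}
        ≤ ENNReal.ofReal (A * Real.exp (-c * s)) := by
  obtain ⟨hρ0, hρ1, haρ⟩ := geomDrift_bounds hq0 hq1 hC₁
  set a : ℝ := (3 - q) / 2 with ha_def
  set ρ := geomDrift q a C₁
  have ha : 1 ≤ a := by linarith
  have haq : a * q < 1 := by rw [ha_def]; nlinarith
  have hdrift : ∀ i m, C₁ ≤ m → ∑' k, ENNReal.ofReal a ^ (max m k - 1) * P {ω | Z i ω = k}
      ≤ ENNReal.ofReal ρ * ENNReal.ofReal a ^ m := fun i _ hm =>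
    tsum_pow_max_sub_one_le_geomDrift hq0.le hq1.le (by positivity) haq (hmeas i) (hpos i)
      (hgeom i) hm
  refine ⟨ρ⁻¹, (one_lt_inv₀ hρ0).mpr hρ1, -Real.log ρ / 2,
    by linarith [Real.log_neg hρ0 hρ1], fun t ht s hs => ?_⟩
  set n := 10 * t + ⌊s / 2⌋₊
  have hn : (n : ℝ≥0∞) ≤ ENNReal.ofReal (10 * t + s / 2) := by
    rw [← ENNReal.ofReal_natCast]
    refine ENNReal.ofReal_le_ofReal ?_
    push_cast [n]
    linarith [Nat.floor_le (by positivity : 0 ≤ s / 2)]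
  calc P {ω | ENNReal.ofReal (10 * t + s / 2) < retTimeLe (chainM t (fun n => Z n ω)) C₁}
      ≤ P {ω | StaysAbove (chainM t (Z · ω)) C₁ n} :=
        measure_mono fun ω hω => StaysAbove.of_lt_retTimeLe hω hn
    _ ≤ ENNReal.ofReal ρ ^ n * ENNReal.ofReal a ^ t :=
        measure_staysAbove_le hmeas hindep hdrift
          (fun m => one_le_pow₀ (ENNReal.one_le_ofReal.mpr ha)) ht n
    _ = ENNReal.ofReal (a ^ t * ρ ^ n) := by
        rw [ENNReal.ofReal_mul (by positivity), ENNReal.ofReal_pow hρ0.le,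
          ENNReal.ofReal_pow (by positivity), mul_comm]
    _ ≤ ENNReal.ofReal (ρ⁻¹ * Real.exp (-(-Real.log ρ / 2) * s)) := by
        rw [show -(-Real.log ρ / 2) * s = Real.log ρ * (s / 2) by ring]
        exact ENNReal.ofReal_le_ofReal
          (pow_mul_pow_add_floor_le (by positivity) hρ0 hρ1 haρ t (s / 2))

/-- **Exponential tail for the passage time down to level `C₁`.** Fix `0 < q < 1` and a
positive integer `C₁` with `q^{C₁}/(1-q) < 1/10`. There are constants `A > 1`, `c > 0`
such that for every integer `t ≥ C₁` and real `s ≥ 0`,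
`P_t(R_{C₁}^+ > 10 t + s/2) ≤ A e^{-c s}`. -/
theorem passage_time_exponential_tail
    {Ω : Type*} [MeasurableSpace Ω] (P : Measure Ω) [IsProbabilityMeasure P]
    (q : ℝ) (hq0 : 0 < q) (hq1 : q < 1)
    (Z : ℕ → Ω → ℕ)
    (hmeas : ∀ i, Measurable (Z i))
    (hindep : ProbabilityTheory.iIndepFun Z P)
    (hpos : ∀ i ω, 1 ≤ Z i ω)
    (hgeom : ∀ i k, 1 ≤ k →
      P {ω | Z i ω = k} = ENNReal.ofReal ((1 - q) * q ^ (k - 1)))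
    (C₁ : ℕ) (hC₁pos : 1 ≤ C₁) (hC₁ : q ^ C₁ / (1 - q) < 1 / 10) :
    ∃ A > (1 : ℝ), ∃ c > (0 : ℝ), ∀ t : ℕ, C₁ ≤ t → ∀ s : ℝ, 0 ≤ s →
      P {ω | ENNReal.ofReal (10 * t + s / 2)
          < retTimeLe (chainM t (fun n => Z n ω)) C₁}
        ≤ ENNReal.ofReal (A * Real.exp (-c * s)) :=
  passage_time_exponential_tail_general P q hq0 hq1 Z hmeas hindep hpos hgeom C₁ hC₁

end
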